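/- Let Y have Student's t(λ) density with λ > 0. Then E[Y²/(1+Y²/λ)²] = λ²/((λ+1)(λ+3)), E[Y²/(1+Y²/λ)] = λ/(λ+1), and E[Y⁴/(1+Y²/λ)²] = 3λ²/((λ+1)(λ+3)). -/

import Mathlib

/-!
Put `V = (1 + Y²/λ)⁻¹`. Since `Y²/(1 + Y²/λ) = λ(1 - V)`, the three expectations are
`λ E[V - V²]`, `λ E[1 - V]` and `λ² E[(1 - V)²]`, so only `E[V]` and `E[V²]` are needed.
Now `E[Vᵏ] = C_λ ∫ (1 + y²/λ)^(-(λ+1)/2 - k) dy`, and the substitution `t = x²/(1 + x²)`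
turns `∫ (1 + x²)^(-c) dx` into the Beta integral `B(1/2, c - 1/2) = √π Γ(c - 1/2)/Γ(c)`.
Hence `E[Vᵏ⁺¹] = (λ + 2k)/(λ + 1 + 2k) · E[Vᵏ]` by `Γ(s + 1) = s Γ(s)`, and `E[1] = 1`.
-/

open MeasureTheory Real Set

/-- The Student `t(λ)` density normalizing constant `C_λ = Γ((λ+1)/2)/(√(λπ)Γ(λ/2))`. -/
noncomputable def studentConst (lam : ℝ) : ℝ :=
  Real.Gamma ((lam + 1) / 2) / (Real.sqrt (lam * π) * Real.Gamma (lam / 2))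

/-- The Student `t(λ)` density `y ↦ C_λ (1 + y²/λ)^{-(λ+1)/2}`. -/
noncomputable def studentDens (lam y : ℝ) : ℝ :=
  studentConst lam * (1 + y ^ 2 / lam) ^ (-(lam + 1) / 2)

lemma integral_rpow_mul_one_sub_rpow {u v : ℝ} (hu : 0 < u) (hv : 0 < v) :
    ∫ x in (0 : ℝ)..1, x ^ (u - 1) * (1 - x) ^ (v - 1) = Gamma u * Gamma v / Gamma (u + v) := by
  apply Complex.ofReal_injective
  have h := Complex.betaIntegral_eq_Gamma_mul_div u v (by simpa) (by simpa)
  rw [← Complex.ofReal_add, Complex.Gamma_ofReal, Complex.Gamma_ofReal, Complex.Gamma_ofReal,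
    Complex.betaIntegral] at h
  push_cast
  rw [← h, ← intervalIntegral.integral_ofReal]
  refine intervalIntegral.integral_congr fun x hx => ?_
  rw [uIcc_of_le zero_le_one] at hx
  simp only [Complex.ofReal_mul, Complex.ofReal_cpow hx.1, Complex.ofReal_cpow (sub_nonneg.2 hx.2)]
  push_cast
  rfl

lemma hasDerivAt_sq_div_one_add_sq (x : ℝ) :
    HasDerivAt (fun x : ℝ => x ^ 2 / (1 + x ^ 2)) (2 * x / (1 + x ^ 2) ^ 2) x := by
  have hw : 1 + x ^ 2 ≠ 0 := by positivity
  refine ((hasDerivAt_pow 2 x).div ((hasDerivAt_pow 2 x).const_add 1) hw).congr_deriv ?_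
  field_simp
  ring

lemma injOn_sq_div_one_add_sq : InjOn (fun x : ℝ => x ^ 2 / (1 + x ^ 2)) (Ioi 0) := by
  intro a (ha : 0 < a) b (hb : 0 < b) hab
  have hsq : a ^ 2 = b ^ 2 := by
    simp only at hab
    field_simp at hab
    linarith
  exact (pow_left_inj₀ ha.le hb.le two_ne_zero).1 hsq

lemma image_sq_div_one_add_sq_Ioi : (fun x : ℝ => x ^ 2 / (1 + x ^ 2)) '' Ioi 0 = Ioo 0 1 := by
  refine Subset.antisymm ?_ fun t ht => ?_
  · rintro - ⟨x, hx, rfl⟩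
    have hx : 0 < x := hx
    exact ⟨by positivity, (div_lt_one (by positivity)).2 (by linarith)⟩
  · have h1t : 0 < 1 - t := sub_pos.2 ht.2
    refine ⟨√(t / (1 - t)), sqrt_pos.2 (div_pos ht.1 h1t), ?_⟩
    simp only
    rw [sq_sqrt (div_pos ht.1 h1t).le]
    field_simp
    ring

lemma abs_deriv_sq_div_one_add_sq_mul {c x : ℝ} (hx : 0 < x) :
    |2 * x / (1 + x ^ 2) ^ 2| * ((x ^ 2 / (1 + x ^ 2)) ^ ((1 : ℝ) / 2 - 1) *
      (1 - x ^ 2 / (1 + x ^ 2)) ^ ((c - 1 / 2) - 1)) = 2 * (1 + x ^ 2) ^ (-c) := by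
  set w := 1 + x ^ 2
  have hw : 0 < w := by positivity
  have h1 : 1 - x ^ 2 / w = w⁻¹ := by field_simp; ring
  have e1 : (x ^ 2 / w) ^ ((1 : ℝ) / 2 - 1) = x⁻¹ * w ^ ((1 : ℝ) / 2) := by
    rw [div_eq_mul_inv, mul_rpow (sq_nonneg x) (inv_nonneg.2 hw.le), ← rpow_natCast,
      ← rpow_mul hx.le, inv_rpow hw.le, ← rpow_neg hw.le]
    norm_num [rpow_neg_one]
  have e2 : w ^ ((1 : ℝ) / 2) * w⁻¹ ^ ((c - 1 / 2) - 1) = w ^ (-c) * w ^ 2 := by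
    rw [inv_rpow hw.le, ← rpow_neg hw.le, ← rpow_add hw, ← rpow_natCast, ← rpow_add hw]
    ring_nf
  rw [abs_of_pos (by positivity), h1, e1]
  calc 2 * x / w ^ 2 * (x⁻¹ * w ^ ((1 : ℝ) / 2) * w⁻¹ ^ (c - 1 / 2 - 1))
      = 2 * x * x⁻¹ / w ^ 2 * (w ^ ((1 : ℝ) / 2) * w⁻¹ ^ (c - 1 / 2 - 1)) := by ring
    _ = 2 * w ^ (-c) := by rw [e2]; field_simp

lemma integral_Ioi_one_add_sq_rpow_neg {c : ℝ} (hc : 1 / 2 < c) :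
    ∫ x in Ioi 0, (1 + x ^ 2) ^ (-c) = √π * Gamma (c - 1 / 2) / Gamma c / 2 := by
  have h := integral_image_eq_integral_abs_deriv_smul measurableSet_Ioi
    (fun x _ => (hasDerivAt_sq_div_one_add_sq x).hasDerivWithinAt) injOn_sq_div_one_add_sq
    (fun t => t ^ ((1 : ℝ) / 2 - 1) * (1 - t) ^ ((c - 1 / 2) - 1))
  simp only [smul_eq_mul] at h
  rw [image_sq_div_one_add_sq_Ioi, ← integral_Ioc_eq_integral_Ioo,
    ← intervalIntegral.integral_of_le zero_le_one,
    integral_rpow_mul_one_sub_rpow (by norm_num) (by linarith),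
    setIntegral_congr_fun measurableSet_Ioi fun x hx => abs_deriv_sq_div_one_add_sq_mul hx,
    integral_const_mul, Gamma_one_half_eq, add_sub_cancel] at h
  linarith

lemma integral_one_add_sq_rpow_neg {c : ℝ} (hc : 1 / 2 < c) :
    ∫ x, (1 + x ^ 2) ^ (-c) = √π * Gamma (c - 1 / 2) / Gamma c := by
  have h := integral_comp_abs (f := fun x : ℝ => (1 + x ^ 2) ^ (-c))
  simp only [sq_abs] at h
  rw [h, integral_Ioi_one_add_sq_rpow_neg hc]
  ring

lemma integrable_one_add_sq_rpow_neg {c : ℝ} (hc : 1 / 2 < c) :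
    Integrable fun x : ℝ => (1 + x ^ 2) ^ (-c) := by
  have h := integrable_rpow_neg_one_add_norm_sq (E := ℝ) (μ := volume) (r := 2 * c)
    (by simp; linarith)
  rw [show -(2 * c) / 2 = -c by ring] at h
  simpa only [Real.norm_eq_abs, sq_abs] using h

lemma one_add_sq_div_eq {lam : ℝ} (hlam : 0 < lam) (y : ℝ) :
    1 + y ^ 2 / lam = 1 + (y / √lam) ^ 2 := by
  rw [div_pow, sq_sqrt hlam.le]

lemma integrable_one_add_sq_div_rpow_neg {lam c : ℝ} (hlam : 0 < lam) (hc : 1 / 2 < c) :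
    Integrable fun y : ℝ => (1 + y ^ 2 / lam) ^ (-c) := by
  simp only [one_add_sq_div_eq hlam]
  exact (integrable_one_add_sq_rpow_neg hc).comp_div (sqrt_pos.2 hlam).ne'

lemma integral_one_add_sq_div_rpow_neg {lam c : ℝ} (hlam : 0 < lam) (hc : 1 / 2 < c) :
    ∫ y, (1 + y ^ 2 / lam) ^ (-c) = √(lam * π) * Gamma (c - 1 / 2) / Gamma c := by
  simp only [one_add_sq_div_eq hlam]
  rw [Measure.integral_comp_div (fun x => (1 + x ^ 2) ^ (-c)), integral_one_add_sq_rpow_neg hc,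
    abs_of_pos (sqrt_pos.2 hlam), smul_eq_mul, sqrt_mul hlam.le]
  ring

lemma inv_pow_mul_studentDens {lam : ℝ} (hlam : 0 < lam) (k : ℕ) (y : ℝ) :
    (1 + y ^ 2 / lam)⁻¹ ^ k * studentDens lam y =
      studentConst lam * (1 + y ^ 2 / lam) ^ (-((lam + 1) / 2 + k)) := by
  have hA : 0 < 1 + y ^ 2 / lam := by positivity
  rw [studentDens, inv_pow, ← rpow_natCast, ← rpow_neg hA.le,
    show -((lam + 1) / 2 + k) = -(lam + 1) / 2 + -k by ring, rpow_add hA]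
  ring

lemma integrable_inv_pow_mul_studentDens {lam : ℝ} (hlam : 0 < lam) (k : ℕ) :
    Integrable fun y => (1 + y ^ 2 / lam)⁻¹ ^ k * studentDens lam y := by
  simp only [inv_pow_mul_studentDens hlam]
  exact (integrable_one_add_sq_div_rpow_neg hlam
    (by linarith [k.cast_nonneg (α := ℝ)])).const_mul _

lemma integral_inv_pow_mul_studentDens {lam : ℝ} (hlam : 0 < lam) (k : ℕ) :
    ∫ y, (1 + y ^ 2 / lam)⁻¹ ^ k * studentDens lam y =
      Gamma (lam / 2 + k) * Gamma ((lam + 1) / 2) /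
        (Gamma (lam / 2) * Gamma ((lam + 1) / 2 + k)) := by
  simp only [inv_pow_mul_studentDens hlam]
  rw [integral_const_mul,
    integral_one_add_sq_div_rpow_neg hlam (by linarith [k.cast_nonneg (α := ℝ)]), studentConst,
    show (lam + 1) / 2 + k - 1 / 2 = lam / 2 + k by ring]
  have hS : 0 < √(lam * π) := by positivity
  have hG : 0 < Gamma (lam / 2) := Gamma_pos_of_pos (half_pos hlam)
  have hGk : 0 < Gamma ((lam + 1) / 2 + k) := Gamma_pos_of_pos (by positivity)
  field_simp

lemma integral_studentDens {lam : ℝ} (hlam : 0 < lam) : ∫ y, studentDens lam y = 1 := by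
  have h := integral_inv_pow_mul_studentDens hlam 0
  have hG : 0 < Gamma (lam / 2) := Gamma_pos_of_pos (half_pos hlam)
  have hG' : 0 < Gamma ((lam + 1) / 2) := Gamma_pos_of_pos (by positivity)
  simp only [pow_zero, one_mul, Nat.cast_zero, add_zero] at h
  rw [h]
  field_simp

lemma integral_inv_pow_succ_mul_studentDens {lam : ℝ} (hlam : 0 < lam) (k : ℕ) :
    ∫ y, (1 + y ^ 2 / lam)⁻¹ ^ (k + 1) * studentDens lam y =
      (lam + 2 * k) / (lam + 1 + 2 * k) *
        ∫ y, (1 + y ^ 2 / lam)⁻¹ ^ k * studentDens lam y := by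
  rw [integral_inv_pow_mul_studentDens hlam, integral_inv_pow_mul_studentDens hlam,
    Nat.cast_succ, ← add_assoc, ← add_assoc, Gamma_add_one (by positivity),
    Gamma_add_one (by positivity)]
  have hG : 0 < Gamma (lam / 2) := Gamma_pos_of_pos (half_pos hlam)
  have hGk : 0 < Gamma ((lam + 1) / 2 + k) := Gamma_pos_of_pos (by positivity)
  field_simp

lemma integral_inv_mul_studentDens {lam : ℝ} (hlam : 0 < lam) :
    ∫ y, (1 + y ^ 2 / lam)⁻¹ * studentDens lam y = lam / (lam + 1) := by
  simpa [integral_studentDens hlam] using integral_inv_pow_succ_mul_studentDens hlam 0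

lemma integral_inv_sq_mul_studentDens {lam : ℝ} (hlam : 0 < lam) :
    ∫ y, (1 + y ^ 2 / lam)⁻¹ ^ 2 * studentDens lam y =
      lam * (lam + 2) / ((lam + 1) * (lam + 3)) := by
  simp only [integral_inv_pow_succ_mul_studentDens hlam 1, Nat.cast_one, pow_one,
    integral_inv_mul_studentDens hlam]
  field_simp
  ring

lemma integral_quadratic_inv_mul_studentDens {lam : ℝ} (hlam : 0 < lam) (a b c : ℝ) :
    ∫ y, (a + b * (1 + y ^ 2 / lam)⁻¹ + c * (1 + y ^ 2 / lam)⁻¹ ^ 2) * studentDens lam y =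
      a + b * (lam / (lam + 1)) + c * (lam * (lam + 2) / ((lam + 1) * (lam + 3))) := by
  have h0 : Integrable (studentDens lam) := by
    simpa using integrable_inv_pow_mul_studentDens hlam 0
  have h1 := integrable_inv_pow_mul_studentDens hlam 1
  have h2 := integrable_inv_pow_mul_studentDens hlam 2
  simp only [pow_one] at h1
  simp only [add_mul _ _ (studentDens lam _), mul_assoc]
  rw [integral_add ?_ (h2.const_mul c), integral_add (h0.const_mul a) (h1.const_mul b),
    integral_const_mul, integral_const_mul, integral_const_mul, integral_studentDens hlam,
    integral_inv_mul_studentDens hlam, integral_inv_sq_mul_studentDens hlam, mul_one]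
  exact (h0.const_mul a).add (h1.const_mul b)

lemma sq_div_one_add_sq_div {lam : ℝ} (hlam : 0 < lam) (y : ℝ) :
    y ^ 2 / (1 + y ^ 2 / lam) = lam * (1 - (1 + y ^ 2 / lam)⁻¹) := by
  have hA : 0 < 1 + y ^ 2 / lam := by positivity
  field_simp
  ring

lemma integral_sq_div_sq_mul_studentDens {lam : ℝ} (hlam : 0 < lam) :
    ∫ y, y ^ 2 / (1 + y ^ 2 / lam) ^ 2 * studentDens lam y =
      lam ^ 2 / ((lam + 1) * (lam + 3)) := by
  calc ∫ y, y ^ 2 / (1 + y ^ 2 / lam) ^ 2 * studentDens lam y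
      = ∫ y, (0 + lam * (1 + y ^ 2 / lam)⁻¹ + -lam * (1 + y ^ 2 / lam)⁻¹ ^ 2) *
          studentDens lam y := by
        congr 1 with y
        rw [pow_two (1 + _), ← div_div, sq_div_one_add_sq_div hlam]
        ring
    _ = lam ^ 2 / ((lam + 1) * (lam + 3)) := by
        rw [integral_quadratic_inv_mul_studentDens hlam]
        field_simp
        ring

lemma integral_sq_div_mul_studentDens {lam : ℝ} (hlam : 0 < lam) :
    ∫ y, y ^ 2 / (1 + y ^ 2 / lam) * studentDens lam y = lam / (lam + 1) := by
  calc ∫ y, y ^ 2 / (1 + y ^ 2 / lam) * studentDens lam y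
      = ∫ y, (lam + -lam * (1 + y ^ 2 / lam)⁻¹ + 0 * (1 + y ^ 2 / lam)⁻¹ ^ 2) *
          studentDens lam y := by
        congr 1 with y
        rw [sq_div_one_add_sq_div hlam]
        ring
    _ = lam / (lam + 1) := by
        rw [integral_quadratic_inv_mul_studentDens hlam]
        field_simp
        ring

lemma integral_pow_four_div_sq_mul_studentDens {lam : ℝ} (hlam : 0 < lam) :
    ∫ y, y ^ 4 / (1 + y ^ 2 / lam) ^ 2 * studentDens lam y =
      3 * lam ^ 2 / ((lam + 1) * (lam + 3)) := by
  calc ∫ y, y ^ 4 / (1 + y ^ 2 / lam) ^ 2 * studentDens lam y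
      = ∫ y, (lam ^ 2 + -2 * lam ^ 2 * (1 + y ^ 2 / lam)⁻¹ +
          lam ^ 2 * (1 + y ^ 2 / lam)⁻¹ ^ 2) * studentDens lam y := by
        congr 1 with y
        rw [show y ^ 4 = (y ^ 2) ^ 2 by ring, ← div_pow, sq_div_one_add_sq_div hlam]
        ring
    _ = 3 * lam ^ 2 / ((lam + 1) * (lam + 3)) := by
        rw [integral_quadratic_inv_mul_studentDens hlam]
        field_simp
        ring

/-- For `Y ∼ t(λ)` with `λ > 0`: `E[Y²/(1+Y²/λ)²] = λ²/((λ+1)(λ+3))`,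
`E[Y²/(1+Y²/λ)] = λ/(λ+1)`, and `E[Y⁴/(1+Y²/λ)²] = 3λ²/((λ+1)(λ+3))`. -/
theorem student_ratio_moments (lam : ℝ) (hlam : 0 < lam) :
    (∫ y : ℝ, y ^ 2 / (1 + y ^ 2 / lam) ^ 2 * studentDens lam y) =
      lam ^ 2 / ((lam + 1) * (lam + 3)) ∧
    (∫ y : ℝ, y ^ 2 / (1 + y ^ 2 / lam) * studentDens lam y) = lam / (lam + 1) ∧
    (∫ y : ℝ, y ^ 4 / (1 + y ^ 2 / lam) ^ 2 * studentDens lam y) =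
      3 * lam ^ 2 / ((lam + 1) * (lam + 3)) :=
  ⟨integral_sq_div_sq_mul_studentDens hlam, integral_sq_div_mul_studentDens hlam,
    integral_pow_four_div_sq_mul_studentDens hlam⟩
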